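/- Let Δ be a maximal nonhyperelliptic lattice polygon, τ a one-dimensional face of the interior polygon Δ⁽¹⁾, and τ⁽⁻¹⁾ the corresponding relaxed face of Δ. Writing |σ| for the number of lattice points on a face σ: if |τ⁽⁻¹⁾| - 1 > |τ|, then the number of column vectors of Δ whose base facet is τ⁽⁻¹⁾ equals |τ⁽⁻¹⁾| - 1 - |τ|; and if |τ⁽⁻¹⁾| - 1 ≤ |τ|, there are no column vectors with base facet τ⁽⁻¹⁾. -/

import Mathlib

open Set Finset

noncomputable section

/-- A lattice point viewed as a point of the real plane. -/
def toR (p : ℤ × ℤ) : ℝ × ℝ := ((p.1 : ℝ), (p.2 : ℝ))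

/-- The real convex hull of a finite set of lattice points. -/
def polyHull (V : Finset (ℤ × ℤ)) : Set (ℝ × ℝ) :=
  convexHull ℝ (toR '' (V : Set (ℤ × ℤ)))

/-- `V` spans a two-dimensional (lattice) polygon. -/
def IsLatticePolygon (V : Finset (ℤ × ℤ)) : Prop :=
  ∃ p q r : ℤ × ℤ, p ∈ V ∧ q ∈ V ∧ r ∈ V ∧
    AffineIndependent ℝ ![toR p, toR q, toR r]

/-- Interior lattice points of the polygon spanned by `V`. -/
def intPts (V : Finset (ℤ × ℤ)) : Set (ℤ × ℤ) :=
  {p | toR p ∈ interior (polyHull V)}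

/-- Boundary lattice points of the polygon spanned by `V`. -/
def bdPts (V : Finset (ℤ × ℤ)) : Set (ℤ × ℤ) :=
  {p | toR p ∈ frontier (polyHull V)}

/-- All lattice points of the polygon spanned by `V`. -/
def latPts (V : Finset (ℤ × ℤ)) : Set (ℤ × ℤ) :=
  {p | toR p ∈ polyHull V}

/-- The interior polygon: convex hull of the interior lattice points. -/
def intPoly (V : Finset (ℤ × ℤ)) : Set (ℝ × ℝ) :=
  convexHull ℝ (toR '' intPts V)

/-- `Δ` is nonhyperelliptic: its interior polygon is two-dimensional. -/
def Nonhyperelliptic (V : Finset (ℤ × ℤ)) : Prop :=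
  ∃ p q r : ℤ × ℤ, p ∈ intPts V ∧ q ∈ intPts V ∧ r ∈ intPts V ∧
    AffineIndependent ℝ ![toR p, toR q, toR r]

/-- The integer line `a x + b y = d` (with `gcd(a,b) = 1`) supports a
one-dimensional face of the convex set `S`. -/
def IsFaceLine (S : Set (ℝ × ℝ)) (a b d : ℤ) : Prop :=
  IsCoprime a b ∧ (∀ x ∈ S, (a : ℝ) * x.1 + (b : ℝ) * x.2 ≤ (d : ℝ)) ∧
  ∃ p q : ℝ × ℝ, p ∈ S ∧ q ∈ S ∧ p ≠ q ∧
    (a : ℝ) * p.1 + (b : ℝ) * p.2 = (d : ℝ) ∧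
    (a : ℝ) * q.1 + (b : ℝ) * q.2 = (d : ℝ)

/-- A lattice polygon is hyperelliptic if it has at least two interior lattice
points and they are all collinear. -/
def Hyperelliptic (V : Finset (ℤ × ℤ)) : Prop :=
  2 ≤ (intPts V).ncard ∧ Collinear ℝ (toR '' intPts V)

/-- A lattice polygon is maximal if it is not properly contained in another
lattice polygon with the same interior lattice points. -/
def MaximalPoly (V : Finset (ℤ × ℤ)) : Prop :=
  IsLatticePolygon V ∧ ¬ ∃ W : Finset (ℤ × ℤ), IsLatticePolygon W ∧
    polyHull V ⊂ polyHull W ∧ intPts W = intPts V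

/-- A unimodular affine map `x ↦ Ax + b` of `ℤ²`. -/
def unimodMap (a b c d e f : ℤ) (p : ℤ × ℤ) : ℤ × ℤ :=
  (a * p.1 + b * p.2 + e, c * p.1 + d * p.2 + f)

/-- Lattice equivalence of lattice polygons: a unimodular affine transformation
carries the lattice points of one onto the lattice points of the other. -/
def LatEquiv (V W : Finset (ℤ × ℤ)) : Prop :=
  ∃ a b c d e f : ℤ, (a * d - b * c = 1 ∨ a * d - b * c = -1) ∧
    unimodMap a b c d e f '' latPts V = latPts W

/-- The maximal hyperelliptic polygon
`E_k = conv((0,0), (0,2), (g+k,0), (g+2-k,2))`. -/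
def EkVerts (g k : ℤ) : Finset (ℤ × ℤ) :=
  {(0, 0), (0, 2), (g + k, 0), (g + 2 - k, 2)}

/-- `v` is a column vector of the polygon spanned by `V` whose base facet lies
on the line `a x + b y = d`: `v ≠ 0` and translating by `v` every lattice point
of the polygon not on that line lands back in the polygon. -/
def IsColVec (V : Finset (ℤ × ℤ)) (a b d : ℤ) (v : ℤ × ℤ) : Prop :=
  v ≠ 0 ∧ ∀ p : ℤ × ℤ, p ∈ latPts V → a * p.1 + b * p.2 ≠ d → p + v ∈ latPts V

/-!
Choose dual bases `ℓ = (α, β), t` and `u, w` of `ℤ²`: `ℓ` is the level above the line of `τ`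
and `t` the position along it. The lattice points of `τ` have level `c` and positions `a, …, b`
with `a < b`. No lattice point `q` of `Δ` lies above level `c + 1`: the level-`(c + 1)` slice of
the triangle on `q` and the interior points at positions `a`, `a + 1` lies in the interior of `Δ`
and always contains a lattice point, which would be an interior point beyond `τ`. So the lattice
points of `τ⁽⁻¹⁾` are those of `Δ` at level `c + 1`, at positions `A, …, B`.

A column vector `v` with base facet `τ⁽⁻¹⁾` has level `1`: translating an interior point of `τ`
by `v` would otherwise overshoot level `c + 1`, or never reach it and escape the bounded `Δ`.
If `t v ≤ A - a`, walking along `v` up to level `c + 1` shows that `(A - a) ℓ - t` is maximal over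
`Δ` at an interior point of `τ`; so `t v ≥ A - a + 1`, and symmetrically `t v ≤ B - b - 1`.
Conversely, the slice of `Δ` at level `c` does not extend below position `a - 1` (that lattice
point would be interior), which bounds the positions of the lattice points `p` below level `c + 1`
and puts `p + u + k w` into the triangle on `p` and the ends of `τ⁽⁻¹⁾` for all `k` in that range.
Counting gives `(B - b - 1) - (A - a + 1) + 1 = (|τ⁽⁻¹⁾| - 1) - |τ|`.
-/

open Filter Topology

theorem mem_convexHull_inter_of_le {E : Type*} [AddCommGroup E] [Module ℝ E] {S : Set E}
    (f : E →ₗ[ℝ] ℝ) {L : ℝ} (hS : ∀ y ∈ S, f y ≤ L) {x : E} (hx : x ∈ convexHull ℝ S)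
    (hxL : f x = L) : x ∈ convexHull ℝ (S ∩ {y | f y = L}) := by
  classical
  rw [_root_.convexHull_eq] at hx
  obtain ⟨ι, t, w, z, hw₀, hw₁, hz, rfl⟩ := hx
  rw [Finset.centerMass_eq_of_sum_1 _ _ hw₁, map_sum] at hxL
  have hgap : ∑ i ∈ t, w i * (L - f (z i)) = 0 := by
    simp only [map_smul, smul_eq_mul] at hxL
    simp only [mul_sub, Finset.sum_sub_distrib, ← Finset.sum_mul, hw₁, hxL]; ring
  have hlevel : ∀ i ∈ t, w i ≠ 0 → f (z i) = L := fun i hi hwi => by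
    have := (Finset.sum_eq_zero_iff_of_nonneg fun j hj =>
      mul_nonneg (hw₀ j hj) (sub_nonneg.2 (hS _ (hz j hj)))).1 hgap i hi
    linarith [(mul_eq_zero.1 this).resolve_left hwi]
  rw [← Finset.centerMass_filter_ne_zero]
  refine Finset.centerMass_mem_convexHull _ (fun i hi => hw₀ i (Finset.mem_filter.1 hi).1) ?_
    fun i hi => ⟨hz i (Finset.mem_filter.1 hi).1,
      hlevel i (Finset.mem_filter.1 hi).1 (Finset.mem_filter.1 hi).2⟩
  rw [Finset.sum_filter_ne_zero, hw₁]
  exact one_pos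

theorem exists_gt_of_mem_interior {E : Type*} [AddCommGroup E] [Module ℝ E] [TopologicalSpace E]
    [ContinuousAdd E] [ContinuousSMul ℝ E] {S : Set E} {x d : E} (f : E →ₗ[ℝ] ℝ)
    (hx : x ∈ interior S) (hd : 0 < f d) : ∃ y ∈ S, f x < f y := by
  have hlim : Tendsto (fun δ : ℝ => x + δ • d) (𝓝[>] 0) (𝓝 x) := by
    have hcont : Continuous fun δ : ℝ => x + δ • d := by fun_prop
    simpa using (hcont.tendsto 0).mono_left nhdsWithin_le_nhds
  obtain ⟨δ, hδS, hδ⟩ :=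
    ((hlim.eventually (mem_interior_iff_mem_nhds.1 hx)).and self_mem_nhdsWithin).exists
  refine ⟨_, hδS, ?_⟩
  rw [map_add, map_smul, smul_eq_mul, lt_add_iff_pos_right]
  exact mul_pos hδ hd

theorem add_nsmul_mem_of_forall_lt {M : Type*} [AddMonoid M] {S W : Set M} {v p : M}
    (hS : ∀ q ∈ S, q ∉ W → q + v ∈ S) (hp : p ∈ S) {n : ℕ} (hW : ∀ i < n, p + i • v ∉ W) :
    p + n • v ∈ S := by
  induction n with
  | zero => simpa using hp
  | succ n ih =>
    rw [succ_nsmul, ← add_assoc]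
    exact hS _ (ih fun i hi => hW i (Nat.lt_succ_of_lt hi)) (hW n n.lt_succ_self)

def lin (e : ℤ × ℤ) : ℤ × ℤ →+ ℤ where
  toFun p := e.1 * p.1 + e.2 * p.2
  map_zero' := by simp
  map_add' p q := by simp only [Prod.fst_add, Prod.snd_add]; ring

def linR (e : ℤ × ℤ) : ℝ × ℝ →ₗ[ℝ] ℝ :=
  (e.1 : ℝ) • LinearMap.fst ℝ ℝ ℝ + (e.2 : ℝ) • LinearMap.snd ℝ ℝ ℝ

theorem lin_apply (e p : ℤ × ℤ) : lin e p = e.1 * p.1 + e.2 * p.2 := rfl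

theorem linR_apply (e : ℤ × ℤ) (x : ℝ × ℝ) : linR e x = e.1 * x.1 + e.2 * x.2 := by
  simp [linR]

theorem linR_mk (a b : ℤ) (x : ℝ × ℝ) : linR (a, b) x = a * x.1 + b * x.2 :=
  linR_apply (a, b) x

theorem lin_neg_left (e p : ℤ × ℤ) : lin (-e) p = -lin e p := by
  simp only [lin_apply, Prod.fst_neg, Prod.snd_neg]; ring

theorem linR_toR (e p : ℤ × ℤ) : linR e (toR p) = lin e p := by
  simp [linR, lin_apply, toR]

theorem latPts_finite (V : Finset (ℤ × ℤ)) : (latPts V).Finite := by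
  have hemb : IsClosedEmbedding toR :=
    Int.isClosedEmbedding_coe_real.prodMap Int.isClosedEmbedding_coe_real
  exact (hemb.isCompact_preimage
    ((V.finite_toSet.image toR).isCompact_convexHull ℝ)).finite_of_discrete

theorem mem_latPts_of_mem {V : Finset (ℤ × ℤ)} {p : ℤ × ℤ} (hp : p ∈ V) : p ∈ latPts V :=
  subset_convexHull ℝ _ (mem_image_of_mem toR hp)

theorem intPts_subset_latPts (V : Finset (ℤ × ℤ)) : intPts V ⊆ latPts V :=
  fun _ hp => interior_subset (s := polyHull V) hp

theorem toR_mem_intPoly_iff {V : Finset (ℤ × ℤ)} {p : ℤ × ℤ} :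
    toR p ∈ intPoly V ↔ p ∈ intPts V :=
  ⟨fun hp => convexHull_min (image_subset_iff.2 fun _ hq => hq)
      (convex_convexHull ℝ _).interior hp,
    fun hp => subset_convexHull ℝ _ (mem_image_of_mem toR hp)⟩

theorem linR_le_of_mem_polyHull {V : Finset (ℤ × ℤ)} {e : ℤ × ℤ} {r : ℤ}
    (h : ∀ v ∈ V, lin e v ≤ r) {x : ℝ × ℝ} (hx : x ∈ polyHull V) : linR e x ≤ r :=
  convexHull_min (by rintro _ ⟨v, hv, rfl⟩; simpa [linR_toR] using h v hv)
    (convex_halfSpace_le (linR e).isLinear _) hx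

theorem exists_mem_latPts_lin_eq {V : Finset (ℤ × ℤ)} {ℓ u : ℤ × ℤ} (hu : 0 < lin ℓ u)
    {c : ℤ} (hle : ∀ p ∈ latPts V, lin ℓ p ≤ c + 1) {pa : ℤ × ℤ} (hpa : pa ∈ intPts V)
    (hpal : lin ℓ pa = c) :
    ∃ p ∈ latPts V, lin ℓ p = c + 1 := by
  by_contra! h
  obtain ⟨y, hy, hlt⟩ := exists_gt_of_mem_interior (linR ℓ) hpa (d := toR u)
    (by rw [linR_toR]; exact_mod_cast hu)
  have hy' := linR_le_of_mem_polyHull (e := ℓ) (r := c) (fun v hv => by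
    have := hle v (mem_latPts_of_mem hv); have := h v (mem_latPts_of_mem hv); omega) hy
  rw [linR_toR, hpal] at hlt
  linarith

theorem lin_eq_one_of_add_mem {V : Finset (ℤ × ℤ)} {ℓ : ℤ × ℤ} {c : ℤ}
    (hle : ∀ p ∈ latPts V, lin ℓ p ≤ c + 1) {pa v : ℤ × ℤ} (hpa : pa ∈ latPts V)
    (hpal : lin ℓ pa = c) (hv0 : v ≠ 0)
    (hv : ∀ p ∈ latPts V, lin ℓ p ≠ c + 1 → p + v ∈ latPts V) : lin ℓ v = 1 := by
  rcases lt_trichotomy (lin ℓ v) 1 with hlt | heq | hgt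
  · -- the ray from `pa` along `v` never reaches level `c + 1`, so it stays in `latPts V`
    have hray : ∀ n : ℕ, pa + n • v ∈ latPts V := fun n =>
      add_nsmul_mem_of_forall_lt (W := {q | lin ℓ q = c + 1}) hv hpa fun i _ => by
        show lin ℓ (pa + i • v) ≠ c + 1
        rw [map_add, map_nsmul, nsmul_eq_mul]
        nlinarith
    have hinj : Function.Injective fun n : ℕ => n • v := fun m n h => by
      have : (m : ℤ) • v = (n : ℤ) • v := by simpa only [natCast_zsmul] using h
      exact_mod_cast smul_left_injective ℤ hv0 this
    exact (infinite_range_of_injective ((add_right_injective pa).comp hinj)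
      ((latPts_finite V).subset (range_subset_iff.2 hray))).elim
  · exact heq
  · have := hle _ (hv pa hpa (by omega))
    rw [map_add] at this
    omega

/-- Dual bases `ℓ, t` and `u, w` of `ℤ²`: `ℓ` measures the level above a line `ℓ = const`
and `t` the position along it. -/
structure LatticeFrame (ℓ : ℤ × ℤ) where
  t : ℤ × ℤ
  u : ℤ × ℤ
  w : ℤ × ℤ
  lin_u : lin ℓ u = 1
  lin_w : lin ℓ w = 0
  lin_t_u : lin t u = 0
  lin_t_w : lin t w = 1
  decomp : ∀ p, lin ℓ p • u + lin t p • w = p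

namespace LatticeFrame

variable {ℓ : ℤ × ℤ} (F : LatticeFrame ℓ)

theorem nonempty_of_isCoprime {α β : ℤ} (h : IsCoprime α β) :
    Nonempty (LatticeFrame (α, β)) := by
  obtain ⟨σ, τ, hστ⟩ := h
  refine ⟨⟨(-τ, σ), (σ, τ), (-β, α), ?_, ?_, ?_, ?_, fun p => ?_⟩⟩ <;>
    simp only [lin_apply]
  · linear_combination hστ
  · ring
  · ring
  · linear_combination hστ
  · ext <;> simp only [Prod.fst_add, Prod.snd_add, Prod.smul_fst, Prod.smul_snd, smul_eq_mul]
    · linear_combination p.1 * hστ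
    · linear_combination p.2 * hστ

def flip : LatticeFrame ℓ where
  t := -F.t
  u := F.u
  w := -F.w
  lin_u := F.lin_u
  lin_w := by rw [map_neg, F.lin_w, neg_zero]
  lin_t_u := by rw [lin_neg_left, F.lin_t_u, neg_zero]
  lin_t_w := by rw [lin_neg_left, map_neg, F.lin_t_w, neg_neg]
  decomp p := by rw [lin_neg_left, neg_smul_neg, F.decomp]

@[simp] theorem flip_t : F.flip.t = -F.t := rfl

@[simp] theorem flip_w : F.flip.w = -F.w := rfl

def pt (l j : ℤ) : ℤ × ℤ := l • F.u + j • F.w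

@[simp] theorem lin_pt (l j : ℤ) : lin ℓ (F.pt l j) = l := by
  simp only [pt, map_add, map_zsmul, F.lin_u, F.lin_w, smul_eq_mul]; ring

@[simp] theorem lin_t_pt (l j : ℤ) : lin F.t (F.pt l j) = j := by
  simp only [pt, map_add, map_zsmul, F.lin_t_u, F.lin_t_w, smul_eq_mul]; ring

theorem pt_lin (p : ℤ × ℤ) : F.pt (lin ℓ p) (lin F.t p) = p := F.decomp p

theorem mem_image_pt_Icc {d m n : ℤ} {p : ℤ × ℤ} :
    p ∈ F.pt d '' Set.Icc m n ↔ lin ℓ p = d ∧ lin F.t p ∈ Set.Icc m n := by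
  constructor
  · rintro ⟨j, hj, rfl⟩
    simpa using hj
  · rintro ⟨rfl, hp⟩
    exact ⟨_, hp, F.pt_lin p⟩

theorem ncard_image_pt_Icc (d m n : ℤ) : (F.pt d '' Set.Icc m n).ncard = (n + 1 - m).toNat := by
  have hinj : Function.Injective (F.pt d) := fun i j hij => by
    simpa using congrArg (lin F.t) hij
  rw [Set.ncard_image_of_injective _ hinj, ← Finset.coe_Icc, Set.ncard_coe_finset,
    Int.card_Icc]

theorem eq_linR_smul_add (x : ℝ × ℝ) : x = linR ℓ x • toR F.u + linR F.t x • toR F.w := by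
  have h₁ : (ℓ.1 : ℝ) * F.u.1 + F.t.1 * F.w.1 = 1 ∧ (ℓ.1 : ℝ) * F.u.2 + F.t.1 * F.w.2 = 0 := by
    have := F.decomp (1, 0)
    simp only [lin_apply, Prod.ext_iff, Prod.fst_add, Prod.snd_add, Prod.smul_fst,
      Prod.smul_snd, smul_eq_mul, mul_one, mul_zero, add_zero] at this
    exact_mod_cast this
  have h₂ : (ℓ.2 : ℝ) * F.u.1 + F.t.2 * F.w.1 = 0 ∧ (ℓ.2 : ℝ) * F.u.2 + F.t.2 * F.w.2 = 1 := by
    have := F.decomp (0, 1)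
    simp only [lin_apply, Prod.ext_iff, Prod.fst_add, Prod.snd_add, Prod.smul_fst,
      Prod.smul_snd, smul_eq_mul, mul_one, mul_zero, zero_add] at this
    exact_mod_cast this
  ext <;> simp only [linR_apply, Prod.fst_add, Prod.snd_add, Prod.smul_fst, Prod.smul_snd,
    smul_eq_mul, toR]
  · linear_combination -x.1 * h₁.1 - x.2 * h₂.1
  · linear_combination -x.1 * h₁.2 - x.2 * h₂.2

theorem eq_of_linR_eq {x y : ℝ × ℝ} (hℓ : linR ℓ x = linR ℓ y) (ht : linR F.t x = linR F.t y) :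
    x = y := by
  rw [F.eq_linR_smul_add x, F.eq_linR_smul_add y, hℓ, ht]

theorem mem_segment {x y z : ℝ × ℝ} (hx : linR ℓ x = linR ℓ z) (hy : linR ℓ y = linR ℓ z)
    (hxz : linR F.t x ≤ linR F.t z) (hzy : linR F.t z ≤ linR F.t y) : z ∈ segment ℝ x y := by
  rcases hxz.eq_or_lt with h | h
  · rw [← F.eq_of_linR_eq hx h]
    exact left_mem_segment ℝ x y
  · have hpos : 0 < linR F.t y - linR F.t x := by linarith
    set θ := (linR F.t z - linR F.t x) / (linR F.t y - linR F.t x)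
    refine ⟨1 - θ, θ, ?_, div_nonneg (by linarith) hpos.le, by ring, F.eq_of_linR_eq ?_ ?_⟩
    · rw [sub_nonneg, div_le_one hpos]
      linarith
    · simp only [map_add, map_smul, smul_eq_mul, hx, hy]
      ring
    · simp only [map_add, map_smul, smul_eq_mul, θ]
      field_simp
      ring

theorem exists_eq_image_Icc {K : Set (ℝ × ℝ)} (hK : Convex ℝ K) {d : ℤ}
    (hfin : {p | toR p ∈ K ∧ lin ℓ p = d}.Finite)
    (hne : {p | toR p ∈ K ∧ lin ℓ p = d}.Nonempty) :
    ∃ m n, m ≤ n ∧ {p | toR p ∈ K ∧ lin ℓ p = d} = F.pt d '' Set.Icc m n := by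
  obtain ⟨pm, hpm, hmin⟩ := Set.exists_min_image _ (lin F.t) hfin hne
  obtain ⟨pM, hpM, hmax⟩ := Set.exists_max_image _ (lin F.t) hfin hne
  refine ⟨lin F.t pm, lin F.t pM, hmin pM hpM, Set.ext fun p => ⟨fun hp => ?_, fun hp => ?_⟩⟩
  · exact F.mem_image_pt_Icc.2 ⟨hp.2, hmin p hp, hmax p hp⟩
  · obtain ⟨hpl, hpm', hpM'⟩ := F.mem_image_pt_Icc.1 hp
    refine ⟨hK.segment_subset hpm.1 hpM.1 (F.mem_segment ?_ ?_ ?_ ?_), hpl⟩ <;>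
      simp only [linR_toR, hpm.2, hpM.2, hpl, Int.cast_le, hpm', hpM']

theorem add_pt_mem_of_convex {K : Set (ℝ × ℝ)} (hK : Convex ℝ K) {p pA pB : ℤ × ℤ}
    (hp : toR p ∈ K) (hpA : toR pA ∈ K) (hpB : toR pB ∈ K) {n k : ℤ} (hn : 0 < n)
    (hA : lin ℓ pA = lin ℓ p + n) (hB : lin ℓ pB = lin ℓ p + n)
    (hkA : lin F.t pA - lin F.t p ≤ n * k) (hkB : n * k ≤ lin F.t pB - lin F.t p) :
    toR (p + F.pt 1 k) ∈ K := by
  have hnR : (1 : ℝ) ≤ n := by exact_mod_cast hn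
  have hmem : ∀ q, toR q ∈ K → (1 - (1 : ℝ) / n) • toR p + ((1 : ℝ) / n) • toR q ∈ K :=
    fun q hq => hK hp hq (sub_nonneg.2 ((div_le_one (by linarith)).2 hnR)) (by positivity)
      (by ring)
  have hkA' : ((lin F.t pA - lin F.t p : ℤ) : ℝ) ≤ (n * k : ℤ) := by exact_mod_cast hkA
  have hkB' : ((n * k : ℤ) : ℝ) ≤ (lin F.t pB - lin F.t p : ℤ) := by exact_mod_cast hkB
  push_cast at hkA' hkB'
  refine hK.segment_subset (hmem pA hpA) (hmem pB hpB) (F.mem_segment ?_ ?_ ?_ ?_) <;>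
    simp only [map_add, map_smul, smul_eq_mul, linR_toR, F.lin_pt, F.lin_t_pt, hA, hB] <;>
    push_cast <;> field_simp
  · ring
  · ring
  · linarith
  · linarith

section Polygon

variable {V : Finset (ℤ × ℤ)}

theorem lin_le_succ_of_mem_latPts {c : ℤ} (hI : ∀ p ∈ intPts V, lin ℓ p ≤ c) {pa : ℤ × ℤ}
    (hpa : pa ∈ intPts V) (hpa' : pa + F.w ∈ intPts V) (hpal : lin ℓ pa = c) :
    ∀ q ∈ latPts V, lin ℓ q ≤ c + 1 := by
  intro q hq
  by_contra! hq'
  set s := lin ℓ q - (c + 1) with hs_def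
  have hs : 0 < s := by omega
  -- a lattice point of the level-`(c + 1)` slice of the triangle `pa, pa + w, q`; that slice
  -- lies in the interior of `Δ`
  set n := (s * (lin F.t pa + 1) + lin F.t q) / (s + 1)
  have hn₁ : (s + 1) * n ≤ s * (lin F.t pa + 1) + lin F.t q := by
    rw [mul_comm]
    exact Int.ediv_mul_le _ (by omega)
  have hn₂ : s * lin F.t pa + lin F.t q ≤ (s + 1) * n := by
    have := Int.lt_ediv_add_one_mul_self (s * (lin F.t pa + 1) + lin F.t q)
      (by omega : 0 < s + 1)
    linarith
  have hsR : (0 : ℝ) < s := by exact_mod_cast hs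
  set θ : ℝ := s / (s + 1)
  have hθ : 0 < θ := by positivity
  have hθ' : 1 - θ = 1 / (s + 1) := by simp only [θ]; field_simp; ring
  have hslice : ∀ p ∈ intPts V, θ • toR p + (1 - θ) • toR q ∈ interior (polyHull V) :=
    fun p hp => (convex_convexHull ℝ _).combo_interior_closure_mem_interior hp
      (subset_closure hq) hθ (by rw [hθ']; positivity) (by ring)
  have hqR : (lin ℓ q : ℝ) = c + 1 + s := by rw [hs_def]; push_cast; ring
  have hmem : toR (F.pt (c + 1) n) ∈
      segment ℝ (θ • toR pa + (1 - θ) • toR q) (θ • toR (pa + F.w) + (1 - θ) • toR q) := by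
    apply F.mem_segment <;>
      simp only [map_add, map_smul, smul_eq_mul, linR_toR, F.lin_pt, F.lin_t_pt, F.lin_w,
        F.lin_t_w, hpal, hqR, hθ']
    · simp only [θ]; push_cast; field_simp; ring
    · simp only [θ]; push_cast; field_simp; ring
    · have : ((s * lin F.t pa + lin F.t q : ℤ) : ℝ) ≤ ((s + 1) * n : ℤ) := by exact_mod_cast hn₂
      simp only [θ]; push_cast at this ⊢; field_simp; linarith
    · have : (((s + 1) * n : ℤ) : ℝ) ≤ ((s * (lin F.t pa + 1) + lin F.t q : ℤ) : ℝ) := by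
        exact_mod_cast hn₁
      simp only [θ]; push_cast at this ⊢; field_simp; linarith
  have := hI _ ((convex_convexHull ℝ _).interior.segment_subset (hslice pa hpa)
    (hslice _ hpa') hmem)
  rw [F.lin_pt] at this
  omega

theorem sub_one_le_linR_of_mem_polyHull {pa : ℤ × ℤ} (hpa : pa ∈ intPts V)
    (hpa' : pa - F.w ∉ intPts V) {x : ℝ × ℝ} (hx : x ∈ polyHull V)
    (hxl : linR ℓ x = lin ℓ pa) :
    (lin F.t pa : ℝ) - 1 ≤ linR F.t x := by
  by_contra! hlt
  have hℓ : linR ℓ (toR (pa - F.w)) = lin ℓ pa := by simp [linR_toR, F.lin_w]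
  have ht : linR F.t (toR (pa - F.w)) = lin F.t pa - 1 := by simp [linR_toR, F.lin_t_w]
  refine hpa' ((convex_convexHull ℝ _).openSegment_interior_closure_subset_interior hpa
    (subset_closure hx) (mem_openSegment_of_ne_left_right ?_ ?_ ?_))
  · intro h
    rw [← h, linR_toR] at ht
    linarith
  · rintro rfl
    linarith
  · rw [segment_symm]
    exact F.mem_segment (hxl.trans hℓ.symm) (by rw [linR_toR, hℓ]) (by rw [ht]; linarith)
      (by rw [ht, linR_toR]; linarith)

theorem le_lin_t_of_mem_latPts {pa pA p : ℤ × ℤ} (hpa : pa ∈ intPts V)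
    (hpa' : pa - F.w ∉ intPts V) (hpA : pA ∈ latPts V) (hpAl : lin ℓ pA = lin ℓ pa + 1) (hp : p ∈ latPts V)
    (hpl : lin ℓ p ≤ lin ℓ pa) :
    lin F.t pA - (lin ℓ pA - lin ℓ p) * (lin F.t pA - lin F.t pa + 1) ≤ lin F.t p := by
  set n := lin ℓ pA - lin ℓ p with hn_def
  have hn : (1 : ℝ) ≤ n := by exact_mod_cast (by omega : 1 ≤ n)
  have hnR : (lin ℓ pA : ℝ) = lin ℓ p + n := by rw [hn_def]; push_cast; ring
  have hpaR : (lin ℓ pa : ℝ) = lin ℓ p + n - 1 := by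
    rw [hpAl] at hnR; push_cast at hnR; linarith
  set x : ℝ × ℝ := ((1 : ℝ) / n) • toR p + (1 - (1 : ℝ) / n) • toR pA
  have hx : x ∈ polyHull V := (convex_convexHull ℝ _) hp hpA (by positivity)
    (sub_nonneg.2 ((div_le_one (by linarith)).2 hn)) (by ring)
  have hxl : linR ℓ x = lin ℓ pa := by
    simp only [x, map_add, map_smul, smul_eq_mul, linR_toR, hnR, hpaR]
    field_simp
    ring
  have hz := F.sub_one_le_linR_of_mem_polyHull hpa hpa' hx hxl
  simp only [x, map_add, map_smul, smul_eq_mul, linR_toR] at hz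
  have : ((lin F.t pA - n * (lin F.t pA - lin F.t pa + 1) : ℤ) : ℝ) ≤ lin F.t p := by
    push_cast
    field_simp at hz
    nlinarith
  exact_mod_cast this

theorem le_lin_t_of_add_mem {c : ℤ} (hle : ∀ p ∈ latPts V, lin ℓ p ≤ c + 1)
    {pa pA v : ℤ × ℤ} (hpa : pa ∈ intPts V) (hpal : lin ℓ pa = c)
    (hpA : ∀ q ∈ latPts V, lin ℓ q = c + 1 → lin F.t pA ≤ lin F.t q)
    (hv : ∀ p ∈ latPts V, lin ℓ p ≠ c + 1 → p + v ∈ latPts V) (hv1 : lin ℓ v = 1) :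
    lin F.t pA - lin F.t pa + 1 ≤ lin F.t v := by
  by_contra! hk
  set m := lin F.t pA - lin F.t pa with hm
  -- `e = m ℓ - t` is then maximal over `Δ` at the interior point `pa`: walking along `v` from a
  -- lattice point of `Δ` reaches level `c + 1`, where `t ≥ t pA`
  set e : ℤ × ℤ := m • ℓ - F.t
  have he : ∀ p, lin e p = m * lin ℓ p - lin F.t p := fun p => by
    simp only [e, lin_apply, Prod.fst_sub, Prod.snd_sub, Prod.smul_fst, Prod.smul_snd,
      smul_eq_mul]
    ring
  have hbound : ∀ p ∈ latPts V, lin e p ≤ m * (c + 1) - lin F.t pA := by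
    intro p hp
    obtain ⟨j, hj⟩ : ∃ j : ℕ, lin ℓ p + j = c + 1 :=
      ⟨(c + 1 - lin ℓ p).toNat, by have := hle p hp; omega⟩
    have hlev : ∀ i : ℕ, lin ℓ (p + i • v) = lin ℓ p + i := fun i => by
      rw [map_add, map_nsmul, nsmul_eq_mul, hv1, mul_one]
    have hmem : p + j • v ∈ latPts V :=
      add_nsmul_mem_of_forall_lt (W := {q | lin ℓ q = c + 1}) hv hp fun i hi => by
        show lin ℓ (p + i • v) ≠ c + 1
        rw [hlev]
        omega
    have hjv := hpA _ hmem (by rw [hlev, hj])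
    rw [map_add, map_nsmul, nsmul_eq_mul] at hjv
    have hjm := mul_le_mul_of_nonneg_left (show lin F.t v ≤ m by omega)
      (Nat.cast_nonneg j : (0 : ℤ) ≤ j)
    rw [he, show lin ℓ p = c + 1 - j by omega]
    linarith
  obtain ⟨y, hy, hlt⟩ := exists_gt_of_mem_interior (linR e) hpa (d := -toR F.w)
    (by rw [map_neg, linR_toR, he, F.lin_w, F.lin_t_w]; norm_num)
  have hy' := linR_le_of_mem_polyHull (fun v hv => hbound v (mem_latPts_of_mem hv)) hy
  have hpa_e : lin e pa = m * (c + 1) - lin F.t pA := by rw [he, hpal, hm]; ring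
  rw [linR_toR, hpa_e] at hlt
  linarith

theorem lin_t_mem_Icc_of_add_mem {c A B : ℤ} (hle : ∀ p ∈ latPts V, lin ℓ p ≤ c + 1)
    {pa pb v : ℤ × ℤ} (hpa : pa ∈ intPts V) (hpal : lin ℓ pa = c)
    (hpb : pb ∈ intPts V) (hpbl : lin ℓ pb = c)
    (hAB : ∀ q ∈ latPts V, lin ℓ q = c + 1 → lin F.t q ∈ Set.Icc A B) (hv0 : v ≠ 0)
    (hv : ∀ p ∈ latPts V, lin ℓ p ≠ c + 1 → p + v ∈ latPts V) :
    lin ℓ v = 1 ∧ lin F.t v ∈ Set.Icc (A - lin F.t pa + 1) (B - lin F.t pb - 1) := by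
  have hv1 := lin_eq_one_of_add_mem hle (intPts_subset_latPts V hpa) hpal hv0 hv
  have hlo := F.le_lin_t_of_add_mem hle hpa hpal (pA := F.pt (c + 1) A)
    (by simpa using fun q hq hql => (hAB q hq hql).1) hv hv1
  have hhi := F.flip.le_lin_t_of_add_mem hle hpb hpbl (pA := F.pt (c + 1) B)
    (by simpa [lin_neg_left] using fun q hq hql => (hAB q hq hql).2) hv hv1
  simp only [flip_t, lin_neg_left, F.lin_t_pt] at hlo hhi
  exact ⟨hv1, by omega, by omega⟩

theorem add_pt_mem_latPts {c : ℤ} (hle : ∀ p ∈ latPts V, lin ℓ p ≤ c + 1)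
    {pa pb pA pB : ℤ × ℤ} (hpa : pa ∈ intPts V) (hpa' : pa - F.w ∉ intPts V)
    (hpb : pb ∈ intPts V) (hpb' : pb + F.w ∉ intPts V) (hpal : lin ℓ pa = c)
    (hpbl : lin ℓ pb = c) (hpA : pA ∈ latPts V) (hpB : pB ∈ latPts V)
    (hpAl : lin ℓ pA = c + 1) (hpBl : lin ℓ pB = c + 1) {k : ℤ}
    (hk : k ∈ Set.Icc (lin F.t pA - lin F.t pa + 1) (lin F.t pB - lin F.t pb - 1))
    {p : ℤ × ℤ} (hp : p ∈ latPts V) (hpl : lin ℓ p ≠ c + 1) : p + F.pt 1 k ∈ latPts V := by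
  have hpl' : lin ℓ p ≤ c := by have := hle p hp; omega
  have hlo := F.le_lin_t_of_mem_latPts hpa hpa' hpA (by omega) hp (by omega)
  have hhi := F.flip.le_lin_t_of_mem_latPts hpb (by simpa using hpb') hpB (by omega) hp
    (by omega)
  simp only [flip_t, lin_neg_left] at hlo hhi
  have hn : 0 ≤ c + 1 - lin ℓ p := by omega
  have hk₁ := mul_le_mul_of_nonneg_left hk.1 hn
  have hk₂ := mul_le_mul_of_nonneg_left hk.2 hn
  rw [hpAl] at hlo
  rw [hpBl] at hhi
  exact F.add_pt_mem_of_convex (convex_convexHull ℝ _) hp hpA hpB (n := c + 1 - lin ℓ p)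
    (by omega) (by omega) (by omega) (by linarith) (by linarith)

theorem setOf_colVec_eq {c a b A B : ℤ} (hle : ∀ p ∈ latPts V, lin ℓ p ≤ c + 1)
    (hτ : {p | p ∈ intPts V ∧ lin ℓ p = c} = F.pt c '' Set.Icc a b) (hab : a ≤ b)
    (hρ : {p | p ∈ latPts V ∧ lin ℓ p = c + 1} = F.pt (c + 1) '' Set.Icc A B) (hAB : A ≤ B) :
    {v | v ≠ 0 ∧ ∀ p ∈ latPts V, lin ℓ p ≠ c + 1 → p + v ∈ latPts V} =
      F.pt 1 '' Set.Icc (A - a + 1) (B - b - 1) := by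
  have hτ' (p : ℤ × ℤ) : p ∈ intPts V ∧ lin ℓ p = c ↔ lin ℓ p = c ∧ lin F.t p ∈ Set.Icc a b := by
    rw [← F.mem_image_pt_Icc, ← hτ]; rfl
  have hρ' (p : ℤ × ℤ) :
      p ∈ latPts V ∧ lin ℓ p = c + 1 ↔ lin ℓ p = c + 1 ∧ lin F.t p ∈ Set.Icc A B := by
    rw [← F.mem_image_pt_Icc, ← hρ]; rfl
  have hpa : F.pt c a ∈ intPts V := ((hτ' _).2 (by simp [hab])).1
  have hpb : F.pt c b ∈ intPts V := ((hτ' _).2 (by simp [hab])).1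
  have hpa' : F.pt c a - F.w ∉ intPts V := fun h => by
    simpa [F.lin_w, F.lin_t_w] using (hτ' _).1 ⟨h, by simp [F.lin_w]⟩
  have hpb' : F.pt c b + F.w ∉ intPts V := fun h => by
    simpa [F.lin_w, F.lin_t_w] using (hτ' _).1 ⟨h, by simp [F.lin_w]⟩
  ext v
  constructor
  · rintro ⟨hv0, hv⟩
    have := F.lin_t_mem_Icc_of_add_mem hle hpa (F.lin_pt c a) hpb (F.lin_pt c b)
      (fun q hq hql => ((hρ' q).1 ⟨hq, hql⟩).2) hv0 hv
    simp only [F.lin_t_pt] at this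
    exact F.mem_image_pt_Icc.2 this
  · rintro ⟨k, hk, rfl⟩
    refine ⟨fun h => by simpa using congrArg (lin ℓ) h, fun p hp hpl => ?_⟩
    exact F.add_pt_mem_latPts hle hpa hpa' hpb hpb' (F.lin_pt c a) (F.lin_pt c b)
      ((hρ' _).2 (by simp [hAB])).1 ((hρ' _).2 (by simp [hAB])).1 (F.lin_pt _ A) (F.lin_pt _ B)
      (by simpa using hk) hp hpl

end Polygon

end LatticeFrame

theorem LatticeFrame.exists_eq_image_Icc_of_isFaceLine {V : Finset (ℤ × ℤ)} {α β c : ℤ}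
    (F : LatticeFrame (α, β)) (hτ : IsFaceLine (intPoly V) α β c) :
    ∃ a b, a < b ∧ {p | toR p ∈ intPoly V ∧ lin (α, β) p = c} = F.pt c '' Set.Icc a b := by
  obtain ⟨-, hQ, x₁, x₂, hx₁, hx₂, hne, hx₁l, hx₂l⟩ := hτ
  simp only [← linR_mk] at hQ hx₁l hx₂l
  set S := {p | toR p ∈ intPoly V ∧ lin (α, β) p = c}
  have hslice (x : ℝ × ℝ) (hx : x ∈ intPoly V) (hxl : linR (α, β) x = c) :
      x ∈ convexHull ℝ (toR '' S) := by
    refine convexHull_mono ?_ (mem_convexHull_inter_of_le (linR (α, β))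
      (fun y hy => hQ y (subset_convexHull ℝ _ hy)) hx hxl)
    rintro _ ⟨⟨p, hp, rfl⟩, hpl⟩
    refine ⟨p, ⟨subset_convexHull ℝ _ (mem_image_of_mem toR hp), ?_⟩, rfl⟩
    have hpl : linR (α, β) (toR p) = c := hpl
    rw [linR_toR] at hpl
    exact_mod_cast hpl
  have hne' : S.Nonempty := image_nonempty.1 (convexHull_nonempty_iff.1 ⟨x₁, hslice x₁ hx₁ hx₁l⟩)
  have hfin : S.Finite := (latPts_finite V).subset fun p hp =>
    intPts_subset_latPts V (toR_mem_intPoly_iff.1 hp.1)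
  obtain ⟨a, b, hab, hS⟩ := F.exists_eq_image_Icc (convex_convexHull ℝ _) hfin hne'
  refine ⟨a, b, hab.lt_of_ne fun h => hne ?_, hS⟩
  subst h
  have ht (x : ℝ × ℝ) (hx : x ∈ intPoly V) (hxl : linR (α, β) x = c) : linR F.t x = a := by
    refine convexHull_min ?_ (convex_hyperplane (linR F.t).isLinear _) (hslice x hx hxl)
    rintro _ ⟨p, hp, rfl⟩
    obtain ⟨-, hpt⟩ := F.mem_image_pt_Icc.1 ((Set.ext_iff.1 hS p).1 hp)
    simp [linR_toR, le_antisymm hpt.2 hpt.1]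
  exact F.eq_of_linR_eq (hx₁l.trans hx₂l.symm) ((ht x₁ hx₁ hx₁l).trans (ht x₂ hx₂ hx₂l).symm)

theorem count_column_vectors_general (V : Finset (ℤ × ℤ))
    (α β c : ℤ) (hτ : IsFaceLine (intPoly V) α β c)
    (nτ nrel ncol : ℕ)
    (hnτ : {p : ℤ × ℤ | toR p ∈ intPoly V ∧ α * p.1 + β * p.2 = c}.ncard = nτ)
    (hnrel : {p : ℤ × ℤ | p ∈ latPts V ∧ α * p.1 + β * p.2 = c + 1}.ncard = nrel)
    (hncol : {v : ℤ × ℤ | IsColVec V α β (c + 1) v}.ncard = ncol) :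
    ((nτ : ℤ) < (nrel : ℤ) - 1 → (ncol : ℤ) = (nrel : ℤ) - 1 - nτ) ∧
    ((nrel : ℤ) - 1 ≤ (nτ : ℤ) → ncol = 0) := by
  obtain ⟨F⟩ := LatticeFrame.nonempty_of_isCoprime hτ.1
  obtain ⟨a, b, hab, hτ_eq⟩ := F.exists_eq_image_Icc_of_isFaceLine hτ
  have hint : {p | p ∈ intPts V ∧ lin (α, β) p = c} = F.pt c '' Set.Icc a b := by
    simpa only [toR_mem_intPoly_iff] using hτ_eq
  have hmem (j : ℤ) (hj : j ∈ Set.Icc a b) : F.pt c j ∈ intPts V := by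
    have := mem_image_of_mem (F.pt c) hj
    rw [← hint] at this
    exact this.1
  have hI (p : ℤ × ℤ) (hp : p ∈ intPts V) : lin (α, β) p ≤ c := by
    have := hτ.2.1 _ (toR_mem_intPoly_iff.2 hp)
    rw [← linR_mk, linR_toR] at this
    exact_mod_cast this
  have hle := F.lin_le_succ_of_mem_latPts hI (hmem a ⟨le_rfl, hab.le⟩)
    (by simpa only [LatticeFrame.pt, add_smul, one_smul, add_assoc]
      using hmem (a + 1) ⟨by omega, hab⟩)
    (F.lin_pt c a)
  obtain ⟨A, B, hAB, hρ_eq⟩ := F.exists_eq_image_Icc (convex_convexHull ℝ _)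
    ((latPts_finite V).subset fun _ hp => hp.1)
    (exists_mem_latPts_lin_eq (by rw [F.lin_u]; exact one_pos) hle (hmem a ⟨le_rfl, hab.le⟩)
      (F.lin_pt c a))
  have hcol := F.setOf_colVec_eq hle hint hab.le hρ_eq hAB
  rw [show {p : ℤ × ℤ | toR p ∈ intPoly V ∧ α * p.1 + β * p.2 = c} = _ from hτ_eq,
    F.ncard_image_pt_Icc] at hnτ
  rw [show {p : ℤ × ℤ | p ∈ latPts V ∧ α * p.1 + β * p.2 = c + 1} = _ from hρ_eq,
    F.ncard_image_pt_Icc] at hnrel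
  rw [show {v : ℤ × ℤ | IsColVec V α β (c + 1) v} = _ from hcol, F.ncard_image_pt_Icc] at hncol
  omega

/-- Let `Δ` be a maximal nonhyperelliptic lattice polygon and
`τ` a one-dimensional face of `Δ⁽¹⁾`, with primitive supporting inequality
`α x + β y ≤ c`, and `τ⁽⁻¹⁾` the corresponding relaxed face of `Δ` on the line
`α x + β y = c + 1`. If `|τ⁽⁻¹⁾| - 1 > |τ|` then the number of column vectors
with base facet `τ⁽⁻¹⁾` is `|τ⁽⁻¹⁾| - 1 - |τ|`; otherwise there are none. -/
theorem count_column_vectors (V : Finset (ℤ × ℤ)) (hV : IsLatticePolygon V)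
    (hnh : Nonhyperelliptic V) (hmax : MaximalPoly V)
    (α β c : ℤ) (hτ : IsFaceLine (intPoly V) α β c)
    (nτ nrel ncol : ℕ)
    (hnτ : {p : ℤ × ℤ | toR p ∈ intPoly V ∧ α * p.1 + β * p.2 = c}.ncard = nτ)
    (hnrel : {p : ℤ × ℤ | p ∈ latPts V ∧ α * p.1 + β * p.2 = c + 1}.ncard = nrel)
    (hncol : {v : ℤ × ℤ | IsColVec V α β (c + 1) v}.ncard = ncol) :
    ((nτ : ℤ) < (nrel : ℤ) - 1 → (ncol : ℤ) = (nrel : ℤ) - 1 - nτ) ∧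
    ((nrel : ℤ) - 1 ≤ (nτ : ℤ) → ncol = 0) :=
  count_column_vectors_general V α β c hτ nτ nrel ncol hnτ hnrel hncol
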